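/- Let G be a claw-free block graph and let B, B′ be blocks of G with disjoint vertex sets. Let v ∈ B and v′ ∈ B′, let P be the (unique) shortest path from v to v′ in G, and let k = d_G(v, v′). Then the distance between B and B′ in 𝔹(G) equals k - 1, k, or k + 1 according as |V(P) ∩ (V(B) ∪ V(B′))| equals 4, 3, or 2. -/

import Mathlib

open SimpleGraph

/-- A set of vertices induces a connected subgraph with no cut vertex. -/
def NoCutVertexSet {V : Type*} (G : SimpleGraph V) (s : Set V) : Prop :=
  (G.induce s).Connected ∧
    ∀ v : s, ((G.induce s).induce {u : s | u ≠ v}).Preconnected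

/-- A block of `G`: a maximal set of vertices inducing a connected subgraph without
cut vertices. -/
def IsBlock {V : Type*} (G : SimpleGraph V) (s : Set V) : Prop :=
  NoCutVertexSet G s ∧ ∀ t : Set V, s ⊆ t → NoCutVertexSet G t → s = t

/-- The claw `K_{1,3}` with center `0`. -/
def clawGraph : SimpleGraph (Fin 4) :=
  SimpleGraph.fromRel fun a _ => a = 0

/-- The block graph `𝔹(G)`. -/
def blockGraphOf {V : Type*} (G : SimpleGraph V) : SimpleGraph {s : Set V // IsBlock G s} :=
  SimpleGraph.fromRel fun B B' => ((B : Set V) ∩ (B' : Set V)).Nonempty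

namespace BlockProof

variable {V : Type*} {G : SimpleGraph V}

/-- Two vertices are joined by a walk staying inside `s`. -/
def JoinedIn (G : SimpleGraph V) (s : Set V) (x y : V) : Prop :=
  ∃ p : G.Walk x y, ∀ z ∈ p.support, z ∈ s

namespace JoinedIn

lemma left_mem {s : Set V} {x y : V} (h : JoinedIn G s x y) : x ∈ s := by
  obtain ⟨p, hp⟩ := h; exact hp _ p.start_mem_support

lemma right_mem {s : Set V} {x y : V} (h : JoinedIn G s x y) : y ∈ s := by
  obtain ⟨p, hp⟩ := h; exact hp _ p.end_mem_support

lemma refl {s : Set V} {x : V} (hx : x ∈ s) : JoinedIn G s x x :=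
  ⟨Walk.nil, by simp [hx]⟩

lemma symm {s : Set V} {x y : V} (h : JoinedIn G s x y) : JoinedIn G s y x := by
  obtain ⟨p, hp⟩ := h
  exact ⟨p.reverse, by simpa using hp⟩

lemma trans {s : Set V} {x y z : V} (h : JoinedIn G s x y) (h' : JoinedIn G s y z) :
    JoinedIn G s x z := by
  obtain ⟨p, hp⟩ := h; obtain ⟨q, hq⟩ := h'
  refine ⟨p.append q, fun w hw => ?_⟩
  rcases (Walk.mem_support_append_iff _ _).mp hw with h | h
  · exact hp _ h
  · exact hq _ h

lemma mono {s t : Set V} (hst : s ⊆ t) {x y : V} (h : JoinedIn G s x y) :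
    JoinedIn G t x y := by
  obtain ⟨p, hp⟩ := h; exact ⟨p, fun z hz => hst (hp z hz)⟩

lemma of_adj {s : Set V} {x y : V} (h : G.Adj x y) (hx : x ∈ s) (hy : y ∈ s) :
    JoinedIn G s x y :=
  ⟨Walk.cons h Walk.nil, by simp [hx, hy]⟩

end JoinedIn

lemma induce_adj' {s : Set V} {a b : s} (h : G.Adj a b) : (G.induce s).Adj a b := by
  simpa using h

lemma adj_of_induce_adj {s : Set V} {a b : s} (h : (G.induce s).Adj a b) : G.Adj a b := by
  simpa using h

/-- walks in an induced graph give `JoinedIn`. -/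
lemma joinedIn_of_induce_walk {s : Set V} {x y : s} (p : (G.induce s).Walk x y) :
    JoinedIn G s x.1 y.1 := by
  induction p with
  | nil => exact JoinedIn.refl (Subtype.coe_prop _)
  | cons h q ih => exact (JoinedIn.of_adj (adj_of_induce_adj h) (Subtype.coe_prop _)
      (Subtype.coe_prop _)).trans ih

lemma reachable_induce_of_joinedIn {s : Set V} {x y : V} (hx : x ∈ s) (hy : y ∈ s)
    (h : JoinedIn G s x y) : (G.induce s).Reachable ⟨x, hx⟩ ⟨y, hy⟩ := by
  obtain ⟨p, hp⟩ := h
  induction p with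
  | nil => exact Reachable.refl _
  | @cons a b c h q ih =>
    have hb : b ∈ s := hp _ (by simp)
    have ih' := ih hb hy (fun z hz => hp _ (by simp [hz]))
    exact (induce_adj' (a := ⟨a, hx⟩) (b := ⟨b, hb⟩) h).reachable.trans ih'

lemma reachable_induce_iff {s : Set V} (x y : s) :
    (G.induce s).Reachable x y ↔ JoinedIn G s x.1 y.1 := by
  constructor
  · rintro ⟨p⟩; exact joinedIn_of_induce_walk p
  · intro h
    have := reachable_induce_of_joinedIn x.2 y.2 h
    simpa using this

lemma joinedIn_induce_mp {s : Set V} {A : Set s} {x y : s} (p : (G.induce s).Walk x y)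
    (hp : ∀ z ∈ p.support, z ∈ A) : JoinedIn G (Subtype.val '' A) x.1 y.1 := by
  induction p with
  | nil => exact JoinedIn.refl ⟨_, hp _ (by simp), rfl⟩
  | @cons a b c h q ih =>
    have h1 : JoinedIn G (Subtype.val '' A) a.1 b.1 :=
      JoinedIn.of_adj (adj_of_induce_adj h) ⟨a, hp _ (by simp), rfl⟩ ⟨b, hp _ (by simp), rfl⟩
    exact h1.trans (ih fun z hz => hp _ (by simp [hz]))

lemma joinedIn_induce_mpr {s : Set V} {A : Set s} {x y : V} (hx : x ∈ s) (hy : y ∈ s)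
    (p : G.Walk x y) (hp : ∀ z ∈ p.support, z ∈ Subtype.val '' A) :
    JoinedIn (G.induce s) A ⟨x, hx⟩ ⟨y, hy⟩ := by
  induction p with
  | nil =>
    refine JoinedIn.refl ?_
    obtain ⟨a, ha, hav⟩ := hp _ (Walk.start_mem_support _)
    exact (Subtype.ext hav : a = ⟨_, hx⟩) ▸ ha
  | @cons a b c h q ih =>
    have hpa : a ∈ Subtype.val '' A := hp _ (by simp)
    have hpb : b ∈ Subtype.val '' A := hp _ (by simp)
    have hb : b ∈ s := by obtain ⟨u, _, huv⟩ := hpb; exact huv ▸ u.2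
    have haA : (⟨a, hx⟩ : s) ∈ A := by
      obtain ⟨u, hu, huv⟩ := hpa; exact (Subtype.ext huv : u = ⟨a, hx⟩) ▸ hu
    have hbA : (⟨b, hb⟩ : s) ∈ A := by
      obtain ⟨u, hu, huv⟩ := hpb; exact (Subtype.ext huv : u = ⟨b, hb⟩) ▸ hu
    have h1 : JoinedIn (G.induce s) A ⟨a, hx⟩ ⟨b, hb⟩ :=
      JoinedIn.of_adj (induce_adj' (a := ⟨a, hx⟩) (b := ⟨b, hb⟩) h) haA hbA
    exact h1.trans (ih hb hy fun z hz => hp _ (by simp [hz]))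

/-- Translation of `JoinedIn` for an induced graph. -/
lemma joinedIn_induce_iff {s : Set V} {A : Set s} {x y : s} :
    JoinedIn (G.induce s) A x y ↔ JoinedIn G (Subtype.val '' A) x.1 y.1 := by
  constructor
  · rintro ⟨p, hp⟩; exact joinedIn_induce_mp p hp
  · rintro ⟨p, hp⟩
    have := joinedIn_induce_mpr (A := A) x.2 y.2 p hp
    simpa using this

/-- The workhorse characterisation of `NoCutVertexSet` in terms of walks in `G`. -/
lemma noCutVertexSet_iff {s : Set V} :
    NoCutVertexSet G s ↔
      (s.Nonempty ∧ ∀ x ∈ s, ∀ y ∈ s, JoinedIn G s x y) ∧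
      ∀ w ∈ s, ∀ x ∈ s, ∀ y ∈ s, x ≠ w → y ≠ w → JoinedIn G (s \ {w}) x y := by
  unfold NoCutVertexSet
  rw [connected_iff]
  constructor
  · rintro ⟨⟨hpre, hne⟩, hcut⟩
    obtain ⟨x0⟩ := hne
    constructor
    · refine ⟨⟨x0, x0.2⟩, fun x hx y hy => ?_⟩
      have := hpre ⟨x, hx⟩ ⟨y, hy⟩
      rwa [reachable_induce_iff] at this
    · intro w hw x hx y hy hxw hyw
      have hr := hcut ⟨w, hw⟩ ⟨⟨x, hx⟩, by simp [Subtype.ext_iff, hxw]⟩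
        ⟨⟨y, hy⟩, by simp [Subtype.ext_iff, hyw]⟩
      rw [reachable_induce_iff] at hr
      have hr' := joinedIn_induce_iff.mp hr
      refine hr'.mono ?_
      rintro z ⟨u, hu, rfl⟩
      refine ⟨u.2, ?_⟩
      simp only [Set.mem_setOf_eq] at hu
      simpa [Subtype.ext_iff] using hu
  · rintro ⟨⟨⟨x0, hx0⟩, hjoin⟩, hcut⟩
    have hns : Nonempty s := ⟨⟨x0, hx0⟩⟩
    refine ⟨⟨fun x y => ?_, hns⟩, fun w x y => ?_⟩
    · rw [reachable_induce_iff]; exact hjoin _ x.2 _ y.2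
    · rw [reachable_induce_iff, joinedIn_induce_iff]
      have hxw : ((x : s) : V) ≠ ((w : s) : V) := by
        intro h; exact x.2 (Subtype.ext h)
      have hyw : ((y : s) : V) ≠ ((w : s) : V) := by
        intro h; exact y.2 (Subtype.ext h)
      refine (hcut _ (w : s).2 _ (x : s).2 _ (y : s).2 hxw hyw).mono ?_
      rintro z ⟨hz, hzw⟩
      refine ⟨⟨z, hz⟩, ?_, rfl⟩
      simp only [Set.mem_setOf_eq, ne_eq, Subtype.ext_iff]
      simpa using hzw

lemma noCutVertexSet_sUnion_chain {c : Set (Set V)} (hchain : IsChain (· ⊆ ·) c)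
    (hne : c.Nonempty) (h : ∀ t ∈ c, NoCutVertexSet G t) : NoCutVertexSet G (⋃₀ c) := by
  have key : ∀ x ∈ ⋃₀ c, ∀ y ∈ ⋃₀ c, ∃ t ∈ c, x ∈ t ∧ y ∈ t := by
    rintro x ⟨t1, ht1, hx⟩ y ⟨t2, ht2, hy⟩
    rcases eq_or_ne t1 t2 with rfl | hne'
    · exact ⟨t1, ht1, hx, hy⟩
    rcases hchain ht1 ht2 hne' with h12 | h21
    · exact ⟨t2, ht2, h12 hx, hy⟩
    · exact ⟨t1, ht1, hx, h21 hy⟩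
  rw [noCutVertexSet_iff]
  refine ⟨⟨?_, ?_⟩, ?_⟩
  · obtain ⟨t, ht⟩ := hne
    obtain ⟨⟨x, hx⟩, -⟩ := (noCutVertexSet_iff.mp (h t ht)).1
    exact ⟨x, t, ht, hx⟩
  · intro x hx y hy
    obtain ⟨t, ht, hxt, hyt⟩ := key x hx y hy
    exact ((noCutVertexSet_iff.mp (h t ht)).1.2 x hxt y hyt).mono (Set.subset_sUnion_of_mem ht)
  · intro w hw x hx y hy hxw hyw
    obtain ⟨t, ht, hxt, hyt⟩ := key x hx y hy
    by_cases hwt : w ∈ t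
    · exact ((noCutVertexSet_iff.mp (h t ht)).2 w hwt x hxt y hyt hxw hyw).mono
        (Set.diff_subset_diff_left (Set.subset_sUnion_of_mem ht))
    · refine ((noCutVertexSet_iff.mp (h t ht)).1.2 x hxt y hyt).mono ?_
      intro z hz
      exact ⟨Set.subset_sUnion_of_mem ht hz, fun hzw => hwt (hzw ▸ hz)⟩

lemma exists_isBlock_superset {s : Set V} (hs : NoCutVertexSet G s) :
    ∃ t : Set V, IsBlock G t ∧ s ⊆ t := by
  obtain ⟨m, hsm, hm⟩ := zorn_subset_nonempty {t | NoCutVertexSet G t}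
    (fun c hc hchain hcne =>
      ⟨⋃₀ c, noCutVertexSet_sUnion_chain hchain hcne (fun t ht => hc ht),
        fun t ht => Set.subset_sUnion_of_mem ht⟩) s hs
  exact ⟨m, ⟨hm.prop, fun t hmt hnt => (subset_antisymm hmt (hm.le_of_ge hnt hmt))⟩, hsm⟩

/-- The vertex pair of an edge has no cut vertex. -/
lemma noCutVertexSet_pair {x y : V} (h : G.Adj x y) : NoCutVertexSet G {x, y} := by
  rw [noCutVertexSet_iff]
  have hx : x ∈ ({x, y} : Set V) := by simp
  have hy : y ∈ ({x, y} : Set V) := by simp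
  refine ⟨⟨⟨x, hx⟩, ?_⟩, ?_⟩
  · intro a ha b hb
    rcases ha with rfl | ha <;> rcases hb with rfl | hb
    · exact JoinedIn.refl hx
    · cases hb; exact JoinedIn.of_adj h hx hy
    · cases ha; exact (JoinedIn.of_adj h hx hy).symm
    · cases ha; cases hb; exact JoinedIn.refl hy
  · intro w hw a ha b hb haw hbw
    have hab : a = b := by
      rcases ha with rfl | ha <;> rcases hb with rfl | hb <;>
        rcases hw with rfl | hw <;> simp_all
    subst hab
    exact JoinedIn.refl ⟨ha, haw⟩

section Clique

variable (hblock : ∀ s : Set V, IsBlock G s → G.IsClique s)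
include hblock

/-- Every set with no cut vertices is a clique (in a block graph). -/
lemma ncvs_clique {s : Set V} (hs : NoCutVertexSet G s) :
    ∀ x ∈ s, ∀ y ∈ s, x ≠ y → G.Adj x y := by
  obtain ⟨t, htb, hst⟩ := exists_isBlock_superset hs
  intro x hx y hy hxy
  exact hblock t htb (hst hx) (hst hy) hxy

/-- Two distinct vertices lie in at most one common block. -/
lemma block_eq_of_two_mem {B1 B2 : Set V} (h1 : IsBlock G B1) (h2 : IsBlock G B2)
    {x y : V} (hxy : x ≠ y) (hx1 : x ∈ B1) (hy1 : y ∈ B1) (hx2 : x ∈ B2) (hy2 : y ∈ B2) :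
    B1 = B2 := by
  have hcl1 := hblock _ h1
  have hcl2 := hblock _ h2
  have gate : ∀ g, g ∈ B1 → g ∈ B2 → ∀ z ∈ B1 ∪ B2, z = g ∨ G.Adj z g := by
    intro g hg1 hg2 z hz
    rcases eq_or_ne z g with rfl | h
    · exact Or.inl rfl
    · rcases hz with hz | hz
      · exact Or.inr (hcl1 hz hg1 h)
      · exact Or.inr (hcl2 hz hg2 h)
  have hunion : NoCutVertexSet G (B1 ∪ B2) := by
    rw [noCutVertexSet_iff]
    have hgu : ∀ g, g ∈ B1 → g ∈ B2 → ∀ w, g ≠ w → ∀ z ∈ B1 ∪ B2, z ≠ w →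
        JoinedIn G ((B1 ∪ B2) \ {w}) z g := by
      intro g hg1 hg2 w hgw z hz hzw
      rcases gate g hg1 hg2 z hz with rfl | hadj
      · exact JoinedIn.refl ⟨hz, hzw⟩
      · exact JoinedIn.of_adj hadj ⟨hz, hzw⟩ ⟨Or.inl hg1, hgw⟩
    refine ⟨⟨⟨x, Or.inl hx1⟩, ?_⟩, ?_⟩
    · intro a ha b hb
      have h1 : JoinedIn G (B1 ∪ B2) a x := by
        rcases gate x hx1 hx2 a ha with rfl | hadj
        · exact JoinedIn.refl ha
        · exact JoinedIn.of_adj hadj ha (Or.inl hx1)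
      have h2 : JoinedIn G (B1 ∪ B2) b x := by
        rcases gate x hx1 hx2 b hb with rfl | hadj
        · exact JoinedIn.refl hb
        · exact JoinedIn.of_adj hadj hb (Or.inl hx1)
      exact h1.trans h2.symm
    · intro w hw a ha b hb haw hbw
      by_cases hwx : w = x
      · subst hwx
        have hyw : y ≠ w := fun h => hxy (h.symm)
        exact (hgu y hy1 hy2 w hyw a ha haw).trans (hgu y hy1 hy2 w hyw b hb hbw).symm
      · have hxw : x ≠ w := fun h => hwx h.symm
        exact (hgu x hx1 hx2 w hxw a ha haw).trans (hgu x hx1 hx2 w hxw b hb hbw).symm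
  have e1 : B1 = B1 ∪ B2 := h1.2 _ Set.subset_union_left hunion
  have e2 : B2 = B1 ∪ B2 := h2.2 _ Set.subset_union_right hunion
  rw [e1]; exact e2.symm



omit hblock in
/-- Every edge lies in a (unique) block. -/
lemma exists_block_of_adj {x y : V} (h : G.Adj x y) :
    ∃ t : Set V, IsBlock G t ∧ x ∈ t ∧ y ∈ t := by
  obtain ⟨t, htb, hst⟩ := exists_isBlock_superset (noCutVertexSet_pair h)
  exact ⟨t, htb, hst (by simp), hst (by simp)⟩

omit hblock in
lemma isBlock_nonempty {B : Set V} (h : IsBlock G B) : B.Nonempty :=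
  (noCutVertexSet_iff.mp h.1).1.1

end Clique

section Geodesic

variable [DecidableEq V]

lemma length_takeUntil_add_length_dropUntil {v w u : V} (p : G.Walk v w) (h : u ∈ p.support) :
    (p.takeUntil u h).length + (p.dropUntil u h).length = p.length := by
  conv_rhs => rw [← p.take_spec h]
  exact (Walk.length_append _ _).symm

variable (hconn : G.Connected)
include hconn

lemma geodesic_split {v w u : V} {p : G.Walk v w} (hgeo : p.length = G.dist v w)
    (h : u ∈ p.support) :
    (p.takeUntil u h).length = G.dist v u ∧ (p.dropUntil u h).length = G.dist u w ∧
      G.dist v u + G.dist u w = G.dist v w := by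
  have h1 := length_takeUntil_add_length_dropUntil p h
  have h2 := dist_le (p.takeUntil u h)
  have h3 := dist_le (p.dropUntil u h)
  have h4 := hconn.dist_triangle (u := v) (v := u) (w := w)
  omega

lemma geodesic_snd_eq {v w u : V} {p : G.Walk v w} (hgeo : p.length = G.dist v w)
    (h : u ∈ p.support) (hd : G.dist v u = 1) : p.getVert 1 = u := by
  have ht := (geodesic_split hconn hgeo h).1
  conv_lhs => rw [← p.take_spec h]
  rw [Walk.getVert_append, ht, hd]
  simp

omit hconn in
lemma geodesic_cons {v w a : V} {h : G.Adj v a} {q : G.Walk a w}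
    (hgeo : (Walk.cons h q).length = G.dist v w) :
    q.length = G.dist a w ∧ G.dist v w = G.dist a w + 1 := by
  have h1 := dist_le q
  have h2 : G.dist v w ≤ G.dist a w + 1 := by
    obtain ⟨q', hq'⟩ := SimpleGraph.Reachable.exists_walk_length_eq_dist ⟨q⟩
    have := dist_le (Walk.cons h q')
    simp only [Walk.length_cons, hq'] at this
    omega
  simp only [Walk.length_cons] at hgeo
  omega

lemma first_hit {v u : V} (p : G.Walk v u) (hgeo : p.length = G.dist v u) (T : Set V)
    (hu : u ∈ T) :
    ∃ c ∈ T, ∃ p1 : G.Walk v c, p1.length = G.dist v c ∧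
      (∀ z ∈ p1.support, z ∈ p.support) ∧ (∀ z ∈ p1.support, z ∈ T → z = c) ∧
      G.dist v c + G.dist c u = G.dist v u := by
  revert hgeo hu
  induction p with
  | nil =>
    intro hgeo hu
    exact ⟨_, hu, Walk.nil, by simp [SimpleGraph.dist_self], by simp, by simp,
      by simp [SimpleGraph.dist_self]⟩
  | @cons a b w h q ih =>
    intro hgeo hu
    by_cases ha : a ∈ T
    · refine ⟨a, ha, Walk.nil, by simp [SimpleGraph.dist_self], by simp, ?_,
        by simp [SimpleGraph.dist_self]⟩
      intro z hz _
      simpa using hz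
    · obtain ⟨hq, hsum⟩ := geodesic_cons (G := G) hgeo
      obtain ⟨c, hc, q1, hq1len, hq1sub, hq1hit, hq1sum⟩ := ih hq hu
      have hlen : (Walk.cons h q1).length = G.dist a c := by
        have h2 := dist_le (Walk.cons h q1)
        have h3 : G.dist a w ≤ G.dist a c + G.dist c w := hconn.dist_triangle
        simp only [Walk.length_cons] at h2 ⊢
        omega
      refine ⟨c, hc, Walk.cons h q1, hlen, ?_, ?_, ?_⟩
      · intro z hz
        rcases (by simpa using hz : z = a ∨ z ∈ q1.support) with rfl | hz'
        · simp
        · simp [hq1sub z hz']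
      · intro z hz hzT
        rcases (by simpa using hz : z = a ∨ z ∈ q1.support) with rfl | hz'
        · exact absurd hzT ha
        · exact hq1hit z hz' hzT
      · have h2 : G.dist a c = G.dist b c + 1 := by
          have := hlen
          simp only [Walk.length_cons, hq1len] at this
          omega
        omega

end Geodesic

section Theta

variable [DecidableEq V]

lemma end_not_mem_takeUntil {a w x : V} {P : G.Walk a w} (hP : P.IsPath)
    (hx : x ∈ P.support) (hxw : x ≠ w) : w ∉ (P.takeUntil x hx).support := by
  intro hmem
  have hspec := P.take_spec hx
  have hnodup : P.support.Nodup := hP.support_nodup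
  rw [← hspec, Walk.support_append] at hnodup
  have hdisj := List.disjoint_of_nodup_append hnodup
  have hw2 : w ∈ (P.dropUntil x hx).support.tail := by
    have h1 : w ∈ (P.dropUntil x hx).support := Walk.end_mem_support _
    rw [Walk.support_eq_cons, List.mem_cons] at h1
    rcases h1 with h1 | h1
    · exact absurd h1.symm hxw
    · exact h1
  exact hdisj hmem hw2

lemma start_not_mem_dropUntil {w b x : V} {P : G.Walk w b} (hP : P.IsPath)
    (hx : x ∈ P.support) (hxw : x ≠ w) : w ∉ (P.dropUntil x hx).support := by
  intro hmem
  have hspec := P.take_spec hx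
  have hnodup : P.support.Nodup := hP.support_nodup
  rw [← hspec, Walk.support_append] at hnodup
  have hdisj := List.disjoint_of_nodup_append hnodup
  have hw1 : w ∈ (P.takeUntil x hx).support := Walk.start_mem_support _
  have hw2 : w ∈ (P.dropUntil x hx).support.tail := by
    rw [Walk.support_eq_cons, List.mem_cons] at hmem
    rcases hmem with h1 | h1
    · exact absurd h1.symm hxw
    · exact h1
  exact hdisj hw1 hw2

/-- From any vertex of a path one can escape to one of the two ends avoiding
a given other vertex of the path. -/
lemma escape_along_path {a b : V} {W : G.Walk a b} (hW : W.IsPath) {w x : V}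
    (hw : w ∈ W.support) (hx : x ∈ W.support) (hxw : x ≠ w) :
    JoinedIn G {z | z ∈ W.support ∧ z ≠ w} x a ∨
      JoinedIn G {z | z ∈ W.support ∧ z ≠ w} x b := by
  have hspec := W.take_spec hw
  have hx' : x ∈ (W.takeUntil w hw).support ∨ x ∈ (W.dropUntil w hw).support := by
    rw [← Walk.mem_support_append_iff, hspec]; exact hx
  rcases hx' with hxT | hxD
  · left
    set T := W.takeUntil w hw with hT
    have hTpath : T.IsPath := hW.takeUntil hw
    have hwT : w ∉ (T.takeUntil x hxT).support := end_not_mem_takeUntil hTpath hxT hxw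
    refine ⟨(T.takeUntil x hxT).reverse, ?_⟩
    intro z hz
    rw [Walk.support_reverse, List.mem_reverse] at hz
    refine ⟨?_, fun hzw => hwT (hzw ▸ hz)⟩
    exact Walk.support_takeUntil_subset _ _ ((Walk.support_takeUntil_subset _ _) hz)
  · right
    set D := W.dropUntil w hw with hD
    have hDpath : D.IsPath := hW.dropUntil hw
    have hwD : w ∉ (D.dropUntil x hxD).support := start_not_mem_dropUntil hDpath hxD hxw
    refine ⟨D.dropUntil x hxD, ?_⟩
    intro z hz
    refine ⟨?_, fun hzw => hwD (hzw ▸ hz)⟩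
    exact Walk.support_dropUntil_subset _ _ ((Walk.support_dropUntil_subset _ _) hz)

/-- The union of two internally disjoint paths with the same endpoints has no cut vertex. -/
lemma theta_noCutVertexSet {v c : V} (W1 W2 : G.Walk v c) (h1 : W1.IsPath) (h2 : W2.IsPath)
    (hint : ∀ z, z ∈ W1.support → z ∈ W2.support → z = v ∨ z = c) :
    NoCutVertexSet G ({z | z ∈ W1.support} ∪ {z | z ∈ W2.support}) := by
  set S : Set V := {z | z ∈ W1.support} ∪ {z | z ∈ W2.support} with hS
  have hvS : v ∈ S := Or.inl W1.start_mem_support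
  have hcS : c ∈ S := Or.inl W1.end_mem_support
  have joinv : ∀ x ∈ S, JoinedIn G S x v := by
    rintro x (hx | hx)
    · exact ⟨(W1.takeUntil x hx).reverse, fun z hz => Or.inl (by
        rw [Walk.support_reverse, List.mem_reverse] at hz
        exact Walk.support_takeUntil_subset _ _ hz)⟩
    · exact ⟨(W2.takeUntil x hx).reverse, fun z hz => Or.inr (by
        rw [Walk.support_reverse, List.mem_reverse] at hz
        exact Walk.support_takeUntil_subset _ _ hz)⟩
  rw [noCutVertexSet_iff]
  refine ⟨⟨⟨v, hvS⟩, fun x hx y hy => (joinv x hx).trans (joinv y hy).symm⟩, ?_⟩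
  intro w hw x hx y hy hxw hyw
  -- every surviving vertex joins to `v` or to `c` inside `S \ {w}`
  have hesc : ∀ z ∈ S, z ≠ w →
      JoinedIn G (S \ {w}) z v ∨ JoinedIn G (S \ {w}) z c := by
    rintro z hz hzw
    have hmono : ∀ (W : G.Walk v c), (W.support = W1.support ∨ W.support = W2.support) →
        {u | u ∈ W.support ∧ u ≠ w} ⊆ S \ {w} := by
      rintro W hWs u ⟨hu, huw⟩
      refine ⟨?_, huw⟩
      rcases hWs with h | h
      · exact Or.inl (h ▸ hu)
      · exact Or.inr (h ▸ hu)
    rcases hz with hz | hz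
    · by_cases hw1 : w ∈ W1.support
      · rcases escape_along_path h1 hw1 hz hzw with h | h
        · exact Or.inl (h.mono (hmono W1 (Or.inl rfl)))
        · exact Or.inr (h.mono (hmono W1 (Or.inl rfl)))
      · left
        refine JoinedIn.mono (hmono W1 (Or.inl rfl)) ⟨(W1.takeUntil z hz).reverse, ?_⟩
        intro u hu
        rw [Walk.support_reverse, List.mem_reverse] at hu
        have := Walk.support_takeUntil_subset _ _ hu
        exact ⟨this, fun h => hw1 (h ▸ this)⟩
    · by_cases hw2 : w ∈ W2.support
      · rcases escape_along_path h2 hw2 hz hzw with h | h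
        · exact Or.inl (h.mono (hmono W2 (Or.inr rfl)))
        · exact Or.inr (h.mono (hmono W2 (Or.inr rfl)))
      · left
        refine JoinedIn.mono (hmono W2 (Or.inr rfl)) ⟨(W2.takeUntil z hz).reverse, ?_⟩
        intro u hu
        rw [Walk.support_reverse, List.mem_reverse] at hu
        have := Walk.support_takeUntil_subset _ _ hu
        exact ⟨this, fun h => hw2 (h ▸ this)⟩
  -- handle the cases on w
  by_cases hwv : w = v
  · -- everything joins to c
    subst hwv
    have hall : ∀ z ∈ S, z ≠ w → JoinedIn G (S \ {w}) z c := by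
      intro z hz hzw
      rcases hesc z hz hzw with h | h
      · exact absurd rfl h.right_mem.2
      · exact h
    exact (hall x hx hxw).trans (hall y hy hyw).symm
  · by_cases hwc : w = c
    · subst hwc
      have hall : ∀ z ∈ S, z ≠ w → JoinedIn G (S \ {w}) z v := by
        intro z hz hzw
        rcases hesc z hz hzw with h | h
        · exact h
        · exact absurd rfl h.right_mem.2
      exact (hall x hx hxw).trans (hall y hy hyw).symm
    · -- w is internal to at most one of the paths; the other gives a bridge from v to c
      have hbridge : JoinedIn G (S \ {w}) v c := by
        have hnot : ¬ (w ∈ W1.support ∧ w ∈ W2.support) := by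
          rintro ⟨hw1, hw2⟩
          rcases hint w hw1 hw2 with h | h
          exacts [hwv h, hwc h]
        by_cases hw1 : w ∈ W1.support
        · have hw2 : w ∉ W2.support := fun h => hnot ⟨hw1, h⟩
          exact ⟨W2, fun z hz => ⟨Or.inr hz, fun h => hw2 (h ▸ hz)⟩⟩
        · exact ⟨W1, fun z hz => ⟨Or.inl hz, fun h => hw1 (h ▸ hz)⟩⟩
      have hall : ∀ z ∈ S, z ≠ w → JoinedIn G (S \ {w}) z v := by
        intro z hz hzw
        rcases hesc z hz hzw with h | h
        · exact h
        · exact h.trans hbridge.symm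
      exact (hall x hx hxw).trans (hall y hy hyw).symm

end Theta

section Core

variable [DecidableEq V] (hblock : ∀ s : Set V, IsBlock G s → G.IsClique s)
  (hconn : G.Connected)
include hblock hconn

/-- The union of two internally disjoint paths with common endpoints is a clique. -/
lemma theta_clique {v c : V} (W1 W2 : G.Walk v c) (h1 : W1.IsPath) (h2 : W2.IsPath)
    (hint : ∀ z, z ∈ W1.support → z ∈ W2.support → z = v ∨ z = c) :
    ∀ x, (x ∈ W1.support ∨ x ∈ W2.support) → ∀ y, (y ∈ W1.support ∨ y ∈ W2.support) →
      x ≠ y → G.Adj x y := by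
  have := ncvs_clique hblock (theta_noCutVertexSet W1 W2 h1 h2 hint)
  intro x hx y hy hxy
  exact this x hx y hy hxy

/-- A vertex cannot have two distinct neighbours that are both closer to `u`. -/
lemma key_no_branch {v u a b : V} (hva : G.Adj v a) (hvb : G.Adj v b) (hab : a ≠ b)
    (hk : G.dist a u + 1 = G.dist v u) (hk' : G.dist b u + 1 = G.dist v u) : False := by
  obtain ⟨A, hA⟩ := (hconn a u).exists_walk_length_eq_dist
  obtain ⟨Bw, hBw⟩ := (hconn b u).exists_walk_length_eq_dist
  set Q : G.Walk v u := Walk.cons hvb Bw with hQ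
  have hQlen : Q.length = G.dist v u := by
    simp only [hQ, Walk.length_cons, hBw]; omega
  have hQpath : Q.IsPath := Q.isPath_of_length_eq_dist hQlen
  have hvA : v ∉ A.support := by
    intro hmem
    have := (geodesic_split hconn hA hmem).2.2
    have h0 : G.dist a v ≠ 0 := by
      rw [SimpleGraph.dist_ne_zero_iff_ne_and_reachable]
      exact ⟨(G.ne_of_adj hva).symm, hconn a v⟩
    omega
  obtain ⟨c, hcT, p1, hp1len, hp1sub, hp1hit, hp1sum⟩ :=
    first_hit hconn A hA {z | z ∈ Q.support} Q.end_mem_support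
  have hcQ : c ∈ Q.support := hcT
  have hsplitQ := (geodesic_split hconn hQlen hcQ).2.2
  have hac : a ≠ c := by
    rintro rfl
    have h1 := (geodesic_split hconn hQlen (hcT : a ∈ Q.support)).2.2
    have hda : G.dist v a = 1 := by
      have h0 : G.dist v a ≠ 0 := by
        rw [SimpleGraph.dist_ne_zero_iff_ne_and_reachable]
        exact ⟨G.ne_of_adj hva, hconn v a⟩
      omega
    have := geodesic_snd_eq hconn hQlen (hcT : a ∈ Q.support) hda
    simp only [hQ, Walk.getVert_cons_succ, Walk.getVert_zero] at this
    exact hab this.symm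
  have hvc : v ≠ c := by
    rintro rfl
    exact hvA (hp1sub _ p1.end_mem_support)
  have hp1path : p1.IsPath := p1.isPath_of_length_eq_dist hp1len
  have hP1path : (Walk.cons hva p1).IsPath :=
    hp1path.cons fun hmem => hvA (hp1sub _ hmem)
  set Q1 : G.Walk v c := Q.takeUntil c hcQ with hQ1
  have hQ1path : Q1.IsPath := hQpath.takeUntil hcQ
  have hint : ∀ z, z ∈ (Walk.cons hva p1).support → z ∈ Q1.support → z = v ∨ z = c := by
    intro z hz hz'
    rcases (by simpa using hz : z = v ∨ z ∈ p1.support) with rfl | hz''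
    · exact Or.inl rfl
    · exact Or.inr (hp1hit z hz'' (Walk.support_takeUntil_subset _ _ hz'))
  have hclique := theta_clique hblock hconn (Walk.cons hva p1) Q1 hP1path hQ1path hint
  have hvcadj : G.Adj v c := by
    refine hclique v (Or.inl (by simp)) c (Or.inl (by simp [Walk.end_mem_support])) hvc
  have hdvc : G.dist v c = 1 := SimpleGraph.dist_eq_one_iff_adj.mpr hvcadj
  have hcb : c = b := by
    have := geodesic_snd_eq hconn hQlen hcQ hdvc
    simp only [hQ, Walk.getVert_cons_succ, Walk.getVert_zero] at this
    exact this.symm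
  subst hcb
  have hdac : G.dist a c = 0 := by omega
  have : a = c := by
    have := (hconn a c).dist_eq_zero_iff.mp hdac
    exact this
  exact hac this

/-- Uniqueness of geodesics. -/
lemma geodesic_unique {v u : V} (p q : G.Walk v u)
    (hp : p.length = G.dist v u) (hq : q.length = G.dist v u) : p = q := by
  induction p with
  | nil =>
    have h0 : q.length = 0 := by rw [hq, ← hp]; rfl
    exact (Walk.nil_iff_eq_nil.mp (Walk.length_eq_zero_iff.mp h0)).symm
  | @cons v a u h p' ih =>
    cases q with
    | nil =>
      exfalso
      rw [SimpleGraph.dist_self] at hp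
      simp at hp
    | @cons _ b _ h' q' =>
      obtain ⟨hp'len, hsum⟩ := geodesic_cons (G := G) hp
      obtain ⟨hq'len, hsum'⟩ := geodesic_cons (G := G) hq
      by_cases hab : a = b
      · subst hab
        obtain rfl := ih q' hp'len hq'len
        rfl
      · exact absurd (key_no_branch hblock hconn (u := u) h h' hab (by omega) (by omega)) id

/-- If `x` is adjacent to `v` and equally far from `u`, they have
a common neighbour that is closer to `u`. -/
lemma confluent {v x u : V} (hadj : G.Adj v x) (hdx : G.dist x u = G.dist v u)
    (hk : 1 ≤ G.dist v u) :
    ∃ g, G.Adj v g ∧ G.Adj x g ∧ G.dist g u + 1 = G.dist v u := by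
  obtain ⟨Qv, hQv⟩ := (hconn v u).exists_walk_length_eq_dist
  obtain ⟨Qx, hQx⟩ := (hconn x u).exists_walk_length_eq_dist
  have hQxpath : Qx.IsPath := Qx.isPath_of_length_eq_dist hQx
  have hxQv : x ∉ Qv.support := by
    intro hmem
    have := (geodesic_split hconn hQv hmem).2.2
    have h0 : G.dist v x ≠ 0 := by
      rw [SimpleGraph.dist_ne_zero_iff_ne_and_reachable]
      exact ⟨G.ne_of_adj hadj, hconn v x⟩
    omega
  have hvQx : v ∉ Qx.support := by
    intro hmem
    have := (geodesic_split hconn hQx hmem).2.2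
    have h0 : G.dist x v ≠ 0 := by
      rw [SimpleGraph.dist_ne_zero_iff_ne_and_reachable]
      exact ⟨(G.ne_of_adj hadj).symm, hconn x v⟩
    omega
  obtain ⟨c, hcT, p1, hp1len, hp1sub, hp1hit, hp1sum⟩ :=
    first_hit hconn Qv hQv {z | z ∈ Qx.support} Qx.end_mem_support
  have hcQx : c ∈ Qx.support := hcT
  have hsplitQx := (geodesic_split hconn hQx hcQx).2.2
  have hxc : x ≠ c := fun h => hxQv (h ▸ hp1sub _ p1.end_mem_support)
  have hvc : v ≠ c := fun h => hvQx (h ▸ hcQx)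
  have hp1path : p1.IsPath := p1.isPath_of_length_eq_dist hp1len
  have hA : (Walk.cons hadj.symm p1).IsPath :=
    hp1path.cons fun hmem => hxQv ((hp1sub _ hmem))
  set Q1 : G.Walk x c := Qx.takeUntil c hcQx with hQ1
  have hQ1path : Q1.IsPath := hQxpath.takeUntil hcQx
  have hint : ∀ z, z ∈ (Walk.cons hadj.symm p1).support → z ∈ Q1.support → z = x ∨ z = c := by
    intro z hz hz'
    rcases (by simpa using hz : z = x ∨ z ∈ p1.support) with rfl | hz''
    · exact Or.inl rfl
    · exact Or.inr (hp1hit z hz'' (Walk.support_takeUntil_subset _ _ hz'))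
  have hclique := theta_clique hblock hconn _ _ hA hQ1path hint
  have hvmem : v ∈ (Walk.cons hadj.symm p1).support := by simp
  have hcmem : c ∈ (Walk.cons hadj.symm p1).support := by
    simp [p1.end_mem_support]
  have hvcadj : G.Adj v c := hclique v (Or.inl hvmem) c (Or.inl hcmem) hvc
  have hxcadj : G.Adj x c := hclique x (Or.inl (by simp)) c (Or.inl hcmem) hxc
  have hdvc : G.dist v c = 1 := SimpleGraph.dist_eq_one_iff_adj.mpr hvcadj
  exact ⟨c, hvcadj, hxcadj, by omega⟩

end Core

section BlockGraph

variable [DecidableEq V]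

lemma getVert_mem_support {u w : V} (p : G.Walk u w) (n : ℕ) (hn : n ≤ p.length) :
    p.getVert n ∈ p.support :=
  Walk.mem_support_iff_exists_getVert.mpr ⟨n, rfl, hn⟩

/-- A nonempty pairwise adjacent set has no cut vertices. -/
lemma clique_noCutVertexSet {s : Set V} (hne : s.Nonempty)
    (hadj : ∀ x ∈ s, ∀ y ∈ s, x ≠ y → G.Adj x y) : NoCutVertexSet G s := by
  rw [noCutVertexSet_iff]
  refine ⟨⟨hne, fun x hx y hy => ?_⟩, fun w hw x hx y hy hxw hyw => ?_⟩
  · rcases eq_or_ne x y with rfl | hxy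
    · exact JoinedIn.refl hx
    · exact JoinedIn.of_adj (hadj x hx y hy hxy) hx hy
  · rcases eq_or_ne x y with rfl | hxy
    · exact JoinedIn.refl ⟨hx, hxw⟩
    · exact JoinedIn.of_adj (hadj x hx y hy hxy) ⟨hx, hxw⟩ ⟨hy, hyw⟩

omit [DecidableEq V] in
lemma blockAdj_iff {C C' : {s : Set V // IsBlock G s}} :
    (blockGraphOf G).Adj C C' ↔ C ≠ C' ∧ ((C : Set V) ∩ (C' : Set V)).Nonempty := by
  rw [blockGraphOf, SimpleGraph.fromRel_adj, Set.inter_comm]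
  tauto

variable (hblock : ∀ s : Set V, IsBlock G s → G.IsClique s)
include hblock

/-- From a walk in the block graph, build a short walk in `G`. -/
lemma walk_of_blockWalk {C0 Cm : {s : Set V // IsBlock G s}}
    (W : (blockGraphOf G).Walk C0 Cm) {y : V} (hy : y ∈ (Cm : Set V)) :
    ∃ z ∈ (C0 : Set V), ∃ q : G.Walk z y, q.length ≤ W.length := by
  induction W with
  | nil => exact ⟨y, hy, Walk.nil, by simp⟩
  | @cons C0 C1 Cm h W' ih =>
    obtain ⟨z', hz', q', hq'⟩ := ih hy
    obtain ⟨hne, x, hx0, hx1⟩ := blockAdj_iff.mp h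
    rcases eq_or_ne x z' with rfl | hxz
    · exact ⟨x, hx0, q', by simpa using Nat.le_succ_of_le hq'⟩
    · exact ⟨x, hx0, Walk.cons (hblock _ C1.2 hx1 hz' hxz) q', by
        simpa using Nat.succ_le_succ hq'⟩

lemma dist_le_blockWalk {C0 Cm : {s : Set V // IsBlock G s}}
    (W : (blockGraphOf G).Walk C0 Cm) {x y : V} (hx : x ∈ (C0 : Set V))
    (hy : y ∈ (Cm : Set V)) : G.dist x y ≤ W.length + 1 := by
  obtain ⟨z, hz, q, hq⟩ := walk_of_blockWalk hblock W hy
  rcases eq_or_ne x z with rfl | hxz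
  · exact le_trans (dist_le q) (by omega)
  · have := dist_le (Walk.cons (hblock _ C0.2 hx hz hxz) q)
    simp only [Walk.length_cons] at this
    omega

variable (hconn : G.Connected)
include hconn

/-- The sequence of blocks along a geodesic gives a walk in the block graph. -/
lemma block_seq {v v' : V} (p : G.Walk v v') (hlen : p.length = G.dist v v')
    (hpos : 1 ≤ p.length) :
    ∃ (C C' : {s : Set V // IsBlock G s}) (W : (blockGraphOf G).Walk C C'),
      v ∈ (C : Set V) ∧ p.getVert 1 ∈ (C : Set V) ∧ v' ∈ (C' : Set V) ∧
      p.getVert (p.length - 1) ∈ (C' : Set V) ∧ W.length + 1 = p.length := by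
  induction p with
  | nil => simp at hpos
  | @cons v a v' h q ih =>
    obtain ⟨hqlen, hsum⟩ := geodesic_cons (G := G) hlen
    by_cases hq0 : q.length = 0
    · obtain ⟨t, ht, hvt, hv't⟩ := exists_block_of_adj (by
        have : a = v' := Walk.eq_of_length_eq_zero hq0
        exact this ▸ h)
      refine ⟨⟨t, ht⟩, ⟨t, ht⟩, Walk.nil, hvt, ?_, hv't, ?_, by simp [Walk.length_cons, hq0]⟩
      · have ha : a = v' := Walk.eq_of_length_eq_zero hq0
        simp [Walk.getVert_cons_succ, Walk.getVert_zero, ha ▸ hv't]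
      · simp [Walk.length_cons, hq0, Walk.getVert_zero, hvt]
    · obtain ⟨C, C', W, haC, hsndC, hv'C', hpenC', hWlen⟩ := ih hqlen (by omega)
      obtain ⟨t, ht, hvt, hat⟩ := exists_block_of_adj h
      have hqsnd : q.getVert 1 ∈ q.support := getVert_mem_support _ _ (by omega)
      have hqsndp : q.getVert 1 ∈ (Walk.cons h q).support := by
        simp [Walk.support_cons, hqsnd]
      have hd2 : G.dist v (q.getVert 1) = 2 := by
        have h1 := (geodesic_split hconn hlen hqsndp).2.2
        have h2 := (geodesic_split hconn hqlen hqsnd).2.2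
        have h3 : G.dist a (q.getVert 1) = 1 := by
          rw [SimpleGraph.dist_eq_one_iff_adj]
          exact q.adj_snd (by rwa [Walk.nil_iff_length_eq.not.symm] at hq0)
        omega
      have hne : (⟨t, ht⟩ : {s : Set V // IsBlock G s}) ≠ C := by
        intro hEq
        have hvC : v ∈ (C : Set V) := by rw [← hEq]; exact hvt
        have : v = q.getVert 1 ∨ G.Adj v (q.getVert 1) := by
          rcases eq_or_ne v (q.getVert 1) with h' | h'
          · exact Or.inl h'
          · exact Or.inr (hblock _ C.2 hvC hsndC h')
        rcases this with h' | h'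
        · rw [← h'] at hd2; rw [SimpleGraph.dist_self] at hd2; omega
        · rw [SimpleGraph.dist_eq_one_iff_adj.mpr h'] at hd2; omega
      have hadj : (blockGraphOf G).Adj ⟨t, ht⟩ C :=
        blockAdj_iff.mpr ⟨hne, a, hat, haC⟩
      refine ⟨⟨t, ht⟩, C', Walk.cons hadj W, hvt, ?_, hv'C', ?_, ?_⟩
      · simpa [Walk.getVert_cons_succ] using hat
      · have : (Walk.cons h q).length - 1 = (q.length - 1) + 1 := by
          simp [Walk.length_cons]; omega
        rw [this, Walk.getVert_cons_succ]
        exact hpenC'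
      · simp only [Walk.length_cons]; omega

end BlockGraph

section Main

variable [DecidableEq V] (hblock : ∀ s : Set V, IsBlock G s → G.IsClique s)
  (hconn : G.Connected)
include hblock hconn

/-- If the geodesic has a neighbour of `v` at distance `k-1`, it is the second vertex. -/
lemma second_of_geodesic_eq {v v' z : V} {p : G.Walk v v'} (hlen : p.length = G.dist v v')
    (hadj : G.Adj v z) (hd : G.dist z v' + 1 = G.dist v v') : p.getVert 1 = z := by
  obtain ⟨Q, hQ⟩ := (hconn z v').exists_walk_length_eq_dist
  have hc : (Walk.cons hadj Q).length = G.dist v v' := by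
    simp only [Walk.length_cons, hQ]; omega
  have := geodesic_unique hblock hconn p (Walk.cons hadj Q) hlen hc
  rw [this, Walk.getVert_cons_succ, Walk.getVert_zero]

/-- A short block-graph walk forces the penultimate vertex of the geodesic into `B'`. -/
lemma arg_pen {v v' : V} {p : G.Walk v v'} (hlen : p.length = G.dist v v')
    {B' C : {s : Set V // IsBlock G s}} (hv' : v' ∈ (B' : Set V)) (hvC : v ∈ (C : Set V))
    (W : (blockGraphOf G).Walk C B') (hW : W.length + 1 ≤ G.dist v v') :
    p.getVert (p.length - 1) ∈ (B' : Set V) := by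
  obtain ⟨z, hz, q, hq⟩ := walk_of_blockWalk hblock W.reverse (y := v) hvC
  rw [Walk.length_reverse] at hq
  have hdzv : G.dist z v ≤ W.length := le_trans (dist_le q) hq
  have hzv' : z ≠ v' := by
    rintro rfl
    rw [SimpleGraph.dist_comm] at hdzv
    omega
  have hadjz : G.Adj z v' := hblock _ B'.2 hz hv' hzv'
  set Wc : G.Walk v v' := q.reverse.concat hadjz with hWc
  have hWclen : Wc.length = q.length + 1 := by
    simp [hWc, Walk.length_concat]
  have hge := dist_le Wc
  have hWcgeo : Wc.length = G.dist v v' := by omega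
  have hqlen : q.length = G.dist v v' - 1 := by omega
  have hpWc := geodesic_unique hblock hconn p Wc hlen hWcgeo
  rw [hpWc, hWc]
  have : (q.reverse.concat hadjz).length - 1 = q.reverse.length := by
    simp [Walk.length_concat]
  rw [this, Walk.concat, Walk.getVert_append]
  simp [hz]

omit hconn in
lemma triangle_in_block {x y z : V} (hxy : G.Adj x y) (hxz : G.Adj x z) (hyz : G.Adj y z)
    {B : Set V} (hB : IsBlock G B) (hx : x ∈ B) (hy : y ∈ B) : z ∈ B := by
  have hclique : ∀ u ∈ ({x, y, z} : Set V), ∀ w ∈ ({x, y, z} : Set V), u ≠ w → G.Adj u w := by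
    intro u hu w hw huw
    simp only [Set.mem_insert_iff, Set.mem_singleton_iff] at hu hw
    rcases hu with rfl | rfl | rfl <;> rcases hw with rfl | rfl | rfl <;>
      first
        | exact absurd rfl huw
        | assumption
        | exact hxy.symm
        | exact hxz.symm
        | exact hyz.symm
  obtain ⟨T, hT, hsub⟩ := exists_isBlock_superset
    (clique_noCutVertexSet ⟨x, by simp⟩ hclique)
  have hTB : T = B := block_eq_of_two_mem hblock hT hB (G.ne_of_adj hxy)
    (hsub (by simp)) (hsub (by simp)) hx hy
  exact hTB ▸ hsub (by simp)

/-- Main case: both the second and penultimate vertices lie in the end blocks. -/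
lemma main_case4 {B B' : {s : Set V // IsBlock G s}}
    (hdisj : (B : Set V) ∩ (B' : Set V) = ∅) {v v' : V} (hv : v ∈ (B : Set V))
    (hv' : v' ∈ (B' : Set V)) {p : G.Walk v v'} (hlen : p.length = G.dist v v')
    (hpos : 1 ≤ p.length) (hα : p.getVert 1 ∈ (B : Set V))
    (hβ : p.getVert (p.length - 1) ∈ (B' : Set V)) :
    (blockGraphOf G).dist B B' = G.dist v v' - 1 := by
  obtain ⟨C, C', W, hvC, haC, hv'C', hbC', hWlen⟩ := block_seq hblock hconn p hlen hpos
  have hnil : ¬ p.Nil := Walk.not_nil_iff_lt_length.mpr (by omega)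
  have hCB : C = B := by
    refine Subtype.ext (block_eq_of_two_mem hblock C.2 B.2
      (G.ne_of_adj (p.adj_snd hnil)) hvC haC hv hα)
  have hadj_bv' : G.Adj (p.getVert (p.length - 1)) v' := by
    have := p.reverse.adj_snd (by
      rwa [Walk.nil_iff_length_eq.not, Walk.length_reverse, ← Walk.nil_iff_length_eq.not])
    rw [Walk.snd, Walk.getVert_reverse] at this
    exact this.symm
  have hC'B' : C' = B' := by
    refine Subtype.ext (block_eq_of_two_mem hblock C'.2 B'.2
      (G.ne_of_adj hadj_bv').symm hv'C' hbC' hv' hβ)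
  subst hCB; subst hC'B'
  have hub := dist_le W
  obtain ⟨Wm, hWm⟩ := SimpleGraph.Reachable.exists_walk_length_eq_dist ⟨W⟩
  have hlb := dist_le_blockWalk hblock Wm hv hv'
  omega

/-- Main case: the second vertex lies in `B` but the penultimate vertex is not in `B'`. -/
lemma main_case3 {B B' : {s : Set V // IsBlock G s}}
    (hdisj : (B : Set V) ∩ (B' : Set V) = ∅) {v v' : V} (hv : v ∈ (B : Set V))
    (hv' : v' ∈ (B' : Set V)) {p : G.Walk v v'} (hlen : p.length = G.dist v v')
    (hpos : 1 ≤ p.length) (hα : p.getVert 1 ∈ (B : Set V))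
    (hβ : p.getVert (p.length - 1) ∉ (B' : Set V)) :
    (blockGraphOf G).dist B B' = G.dist v v' := by
  obtain ⟨C, C', W, hvC, haC, hv'C', hbC', hWlen⟩ := block_seq hblock hconn p hlen hpos
  have hnil : ¬ p.Nil := Walk.not_nil_iff_lt_length.mpr (by omega)
  have hCB : C = B := by
    refine Subtype.ext (block_eq_of_two_mem hblock C.2 B.2
      (G.ne_of_adj (p.adj_snd hnil)) hvC haC hv hα)
  have hC'B' : C' ≠ B' := by
    rintro rfl; exact hβ hbC'
  have hadjC' : (blockGraphOf G).Adj C' B' := blockAdj_iff.mpr ⟨hC'B', v', hv'C', hv'⟩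
  have hub := dist_le ((W.copy hCB rfl).concat hadjC')
  rw [Walk.length_concat, Walk.length_copy] at hub
  obtain ⟨Wm, hWm⟩ := SimpleGraph.Reachable.exists_walk_length_eq_dist
    ⟨(W.copy hCB rfl).concat hadjC'⟩
  have hlb : ¬ ((blockGraphOf G).dist B B' + 1 ≤ G.dist v v') := by
    intro hle
    exact hβ (arg_pen hblock hconn hlen hv' hv Wm (by omega))
  omega

/-- Main case: neither the second nor the penultimate vertex lies in the end blocks. -/
lemma main_case2 {B B' : {s : Set V // IsBlock G s}}
    (hdisj : (B : Set V) ∩ (B' : Set V) = ∅) {v v' : V} (hv : v ∈ (B : Set V))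
    (hv' : v' ∈ (B' : Set V)) {p : G.Walk v v'} (hlen : p.length = G.dist v v')
    (hpos : 1 ≤ p.length) (hα : p.getVert 1 ∉ (B : Set V))
    (hβ : p.getVert (p.length - 1) ∉ (B' : Set V)) :
    (blockGraphOf G).dist B B' = G.dist v v' + 1 := by
  obtain ⟨C, C', W, hvC, haC, hv'C', hbC', hWlen⟩ := block_seq hblock hconn p hlen hpos
  have hCB : C ≠ B := by rintro rfl; exact hα haC
  have hC'B' : C' ≠ B' := by rintro rfl; exact hβ hbC'
  have hadjB : (blockGraphOf G).Adj B C := blockAdj_iff.mpr ⟨fun h => hCB h.symm, v, hv, hvC⟩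
  have hadjC' : (blockGraphOf G).Adj C' B' := blockAdj_iff.mpr ⟨hC'B', v', hv'C', hv'⟩
  set Wu : (blockGraphOf G).Walk B B' := Walk.cons hadjB (W.concat hadjC') with hWu
  have hub := dist_le Wu
  have hWulen : Wu.length = G.dist v v' + 1 := by
    simp only [hWu, Walk.length_cons, Walk.length_concat]; omega
  rw [hWulen] at hub
  obtain ⟨Wm, hWm⟩ := SimpleGraph.Reachable.exists_walk_length_eq_dist ⟨Wu⟩
  set m := (blockGraphOf G).dist B B' with hm
  -- show `m` cannot be at most `k`
  have hnotle : ¬ (m ≤ G.dist v v') := by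
    intro hle
    rcases Nat.lt_or_ge m (G.dist v v') with hlt | hgem
    · exact hβ (arg_pen hblock hconn hlen hv' hv Wm (by omega))
    · -- m = k
      have hmk : m = G.dist v v' := le_antisymm hle hgem
      have hk1 : 1 ≤ G.dist v v' := by omega
      have hWmpos : 0 < Wm.length := by omega
      cases Wm with
      | nil => rw [Walk.length_nil] at hWm; omega
      | @cons _ C1 _ hadj1 W' =>
        obtain ⟨hBC1, x0, hx0B, hx0C1⟩ := blockAdj_iff.mp hadj1
        have hW'len : W'.length + 1 = m := by
          simpa [Walk.length_cons] using hWm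
        rcases eq_or_ne x0 v with rfl | hx0v
        · -- v ∈ C1, use arg_pen on the tail
          exact hβ (arg_pen hblock hconn hlen hv' hx0C1 W' (by omega))
        · -- gate argument
          have hadjvx0 : G.Adj v x0 := hblock _ B.2 hv hx0B (Ne.symm hx0v)
          have hgate : G.dist v v' ≤ G.dist x0 v' := by
            by_contra hlt'
            push_neg at hlt'
            have htri : G.dist v v' ≤ 1 + G.dist x0 v' := by
              have := hconn.dist_triangle (u := v) (v := x0) (w := v')
              have h1 : G.dist v x0 = 1 := SimpleGraph.dist_eq_one_iff_adj.mpr hadjvx0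
              omega
            have hdx0 : G.dist x0 v' + 1 = G.dist v v' := by omega
            exact hα ((second_of_geodesic_eq hblock hconn hlen hadjvx0 hdx0) ▸ hx0B)
          obtain ⟨w, hwC1, q, hq⟩ := walk_of_blockWalk hblock W' (y := v') hv'
          rcases eq_or_ne x0 w with rfl | hx0w
          · have := dist_le q
            omega
          · have hadjx0w : G.Adj x0 w := hblock _ C1.2 hx0C1 hwC1 hx0w
            have hdx0v' : G.dist x0 v' = G.dist v v' := by
              have := dist_le (Walk.cons hadjx0w q)
              simp only [Walk.length_cons] at this
              omega
            obtain ⟨g, hvg, hx0g, hgd⟩ := confluent hblock hconn hadjvx0 hdx0v' hk1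
            have hga : p.getVert 1 = g := second_of_geodesic_eq hblock hconn hlen hvg hgd
            exact hα (hga ▸ triangle_in_block hblock hadjvx0 hvg hx0g B.2 hv hx0B)
  omega

end Main

end BlockProof

theorem stmt_16 {V : Type*} (G : SimpleGraph V) (hconn : G.Connected)
    (hblock : ∀ s : Set V, IsBlock G s → G.IsClique s)
    (hclaw : ¬ ∃ s : Set V, Nonempty (G.induce s ≃g clawGraph))
    (B B' : {s : Set V // IsBlock G s})
    (hdisj : (B : Set V) ∩ (B' : Set V) = ∅)
    (v v' : V) (hv : v ∈ (B : Set V)) (hv' : v' ∈ (B' : Set V))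
    (p : G.Walk v v') (hp : p.IsPath) (hlen : p.length = G.dist v v') :
    (({x : V | x ∈ p.support} ∩ ((B : Set V) ∪ (B' : Set V))).ncard = 4 →
        (blockGraphOf G).dist B B' = G.dist v v' - 1) ∧
    (({x : V | x ∈ p.support} ∩ ((B : Set V) ∪ (B' : Set V))).ncard = 3 →
        (blockGraphOf G).dist B B' = G.dist v v') ∧
    (({x : V | x ∈ p.support} ∩ ((B : Set V) ∪ (B' : Set V))).ncard = 2 →
        (blockGraphOf G).dist B B' = G.dist v v' + 1) := by
  classical
  open BlockProof in
  have hvv' : v ≠ v' := by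
    rintro rfl
    have : v ∈ (B : Set V) ∩ (B' : Set V) := ⟨hv, hv'⟩
    rw [hdisj] at this
    exact this
  have hk1 : 1 ≤ G.dist v v' := hconn.pos_dist_of_ne hvv'
  have hpos : 1 ≤ p.length := by omega
  have hnil : ¬ p.Nil := Walk.not_nil_iff_lt_length.mpr (by omega)
  set a := p.getVert 1 with ha
  set b := p.getVert (p.length - 1) with hb
  have hadj_va : G.Adj v a := p.adj_snd hnil
  have hadj_v'b : G.Adj v' b := by
    have := p.reverse.adj_snd (by
      rwa [Walk.nil_iff_length_eq.not, Walk.length_reverse, ← Walk.nil_iff_length_eq.not])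
    rwa [Walk.snd, Walk.getVert_reverse] at this
  have hrevlen : p.reverse.length = G.dist v' v := by
    rw [Walk.length_reverse, hlen, SimpleGraph.dist_comm]
  have hS1sub : {x : V | x ∈ p.support} ∩ (B : Set V) ⊆ {v, a} := by
    rintro z ⟨hzs, hzB⟩
    rcases eq_or_ne z v with rfl | hzv
    · exact Or.inl rfl
    · have hadj : G.Adj v z := hblock _ B.2 hv hzB (Ne.symm hzv)
      have hd : G.dist v z = 1 := SimpleGraph.dist_eq_one_iff_adj.mpr hadj
      exact Or.inr (geodesic_snd_eq hconn hlen hzs hd).symm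
  have hS2sub : {x : V | x ∈ p.support} ∩ (B' : Set V) ⊆ {b, v'} := by
    rintro z ⟨hzs, hzB⟩
    rcases eq_or_ne z v' with rfl | hzv
    · exact Or.inr rfl
    · have hadj : G.Adj v' z := hblock _ B'.2 hv' hzB (Ne.symm hzv)
      have hd : G.dist v' z = 1 := SimpleGraph.dist_eq_one_iff_adj.mpr hadj
      have hzrev : z ∈ p.reverse.support := by
        rw [Walk.support_reverse, List.mem_reverse]; exact hzs
      have := geodesic_snd_eq hconn hrevlen hzrev hd
      rw [Walk.getVert_reverse] at this
      exact Or.inl this.symm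
  have hSeq : {x : V | x ∈ p.support} ∩ ((B : Set V) ∪ (B' : Set V)) =
      ({x : V | x ∈ p.support} ∩ (B : Set V)) ∪ ({x : V | x ∈ p.support} ∩ (B' : Set V)) :=
    Set.inter_union_distrib_left _ _ _
  have hdisj12 : Disjoint ({x : V | x ∈ p.support} ∩ (B : Set V))
      ({x : V | x ∈ p.support} ∩ (B' : Set V)) := by
    rw [Set.disjoint_left]
    rintro z ⟨_, hz1⟩ ⟨_, hz2⟩
    have : z ∈ (B : Set V) ∩ (B' : Set V) := ⟨hz1, hz2⟩
    rw [hdisj] at this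
    exact this
  have hfin1 : ({x : V | x ∈ p.support} ∩ (B : Set V)).Finite :=
    Set.Finite.subset (Set.toFinite {v, a}) hS1sub
  have hfin2 : ({x : V | x ∈ p.support} ∩ (B' : Set V)).Finite :=
    Set.Finite.subset (Set.toFinite {b, v'}) hS2sub
  have hNsum : ({x : V | x ∈ p.support} ∩ ((B : Set V) ∪ (B' : Set V))).ncard =
      ({x : V | x ∈ p.support} ∩ (B : Set V)).ncard +
      ({x : V | x ∈ p.support} ∩ (B' : Set V)).ncard := by
    rw [hSeq, Set.ncard_union_eq hdisj12 hfin1 hfin2]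
  have hva_mem : v ∈ {x : V | x ∈ p.support} := p.start_mem_support
  have hv'_mem : v' ∈ {x : V | x ∈ p.support} := p.end_mem_support
  have ha_mem : a ∈ {x : V | x ∈ p.support} := getVert_mem_support p 1 (by omega)
  have hb_mem : b ∈ {x : V | x ∈ p.support} := getVert_mem_support p (p.length - 1) (by omega)
  by_cases hα : a ∈ (B : Set V) <;> by_cases hβ : b ∈ (B' : Set V)
  · -- card 4 case
    have h1 : ({x : V | x ∈ p.support} ∩ (B : Set V)).ncard = 2 := by
      have : {x : V | x ∈ p.support} ∩ (B : Set V) = {v, a} :=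
        Set.Subset.antisymm hS1sub (by
          rintro z (rfl | rfl)
          exacts [⟨hva_mem, hv⟩, ⟨ha_mem, hα⟩])
      rw [this, Set.ncard_pair (G.ne_of_adj hadj_va)]
    have h2 : ({x : V | x ∈ p.support} ∩ (B' : Set V)).ncard = 2 := by
      have : {x : V | x ∈ p.support} ∩ (B' : Set V) = {b, v'} :=
        Set.Subset.antisymm hS2sub (by
          rintro z (rfl | rfl)
          exacts [⟨hb_mem, hβ⟩, ⟨hv'_mem, hv'⟩])
      rw [this, Set.ncard_pair (G.ne_of_adj hadj_v'b).symm]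
    refine ⟨fun _ => main_case4 hblock hconn hdisj hv hv' hlen hpos hα hβ,
      fun h => by omega, fun h => by omega⟩
  · -- card 3 case (α, ¬β)
    have h1 : ({x : V | x ∈ p.support} ∩ (B : Set V)).ncard = 2 := by
      have : {x : V | x ∈ p.support} ∩ (B : Set V) = {v, a} :=
        Set.Subset.antisymm hS1sub (by
          rintro z (rfl | rfl)
          exacts [⟨hva_mem, hv⟩, ⟨ha_mem, hα⟩])
      rw [this, Set.ncard_pair (G.ne_of_adj hadj_va)]
    have h2 : ({x : V | x ∈ p.support} ∩ (B' : Set V)).ncard = 1 := by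
      have : {x : V | x ∈ p.support} ∩ (B' : Set V) = {v'} :=
        Set.Subset.antisymm (by
          rintro z hz
          rcases hS2sub hz with rfl | rfl
          · exact absurd hz.2 hβ
          · rfl)
          (by rintro z rfl; exact ⟨hv'_mem, hv'⟩)
      rw [this, Set.ncard_singleton]
    refine ⟨fun h => by omega,
      fun _ => main_case3 hblock hconn hdisj hv hv' hlen hpos hα hβ, fun h => by omega⟩
  · -- card 3 case (¬α, β): reverse everything
    have h1 : ({x : V | x ∈ p.support} ∩ (B : Set V)).ncard = 1 := by
      have : {x : V | x ∈ p.support} ∩ (B : Set V) = {v} :=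
        Set.Subset.antisymm (by
          rintro z hz
          rcases hS1sub hz with rfl | rfl
          · rfl
          · exact absurd hz.2 hα)
          (by rintro z rfl; exact ⟨hva_mem, hv⟩)
      rw [this, Set.ncard_singleton]
    have h2 : ({x : V | x ∈ p.support} ∩ (B' : Set V)).ncard = 2 := by
      have : {x : V | x ∈ p.support} ∩ (B' : Set V) = {b, v'} :=
        Set.Subset.antisymm hS2sub (by
          rintro z (rfl | rfl)
          exacts [⟨hb_mem, hβ⟩, ⟨hv'_mem, hv'⟩])
      rw [this, Set.ncard_pair (G.ne_of_adj hadj_v'b).symm]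
    have hdisj' : (B' : Set V) ∩ (B : Set V) = ∅ := by
      rw [Set.inter_comm]; exact hdisj
    have hrevsnd : p.reverse.getVert 1 = b := by rw [Walk.getVert_reverse]
    have hrevpen : p.reverse.getVert (p.reverse.length - 1) = a := by
      rw [Walk.length_reverse, Walk.getVert_reverse]
      congr 1
      omega
    have hmain := main_case3 hblock hconn hdisj' hv' hv
      (p := p.reverse) hrevlen (by rwa [Walk.length_reverse])
      (by rwa [hrevsnd]) (by rwa [hrevpen])
    rw [SimpleGraph.dist_comm (u := B') (v := B), SimpleGraph.dist_comm (u := v') (v := v)]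
      at hmain
    exact ⟨fun h => by omega, fun _ => hmain, fun h => by omega⟩
  · -- card 2 case
    have h1 : ({x : V | x ∈ p.support} ∩ (B : Set V)).ncard = 1 := by
      have : {x : V | x ∈ p.support} ∩ (B : Set V) = {v} :=
        Set.Subset.antisymm (by
          rintro z hz
          rcases hS1sub hz with rfl | rfl
          · rfl
          · exact absurd hz.2 hα)
          (by rintro z rfl; exact ⟨hva_mem, hv⟩)
      rw [this, Set.ncard_singleton]
    have h2 : ({x : V | x ∈ p.support} ∩ (B' : Set V)).ncard = 1 := by
      have : {x : V | x ∈ p.support} ∩ (B' : Set V) = {v'} :=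
        Set.Subset.antisymm (by
          rintro z hz
          rcases hS2sub hz with rfl | rfl
          · exact absurd hz.2 hβ
          · rfl)
          (by rintro z rfl; exact ⟨hv'_mem, hv'⟩)
      rw [this, Set.ncard_singleton]
    refine ⟨fun h => by omega, fun h => by omega,
      fun _ => main_case2 hblock hconn hdisj hv hv' hlen hpos hα hβ⟩
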